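/- arXiv:math/0605126 — 8 statements merged into one kernel-verified Lean document; each statement's English description precedes it below -/
import Mathlib

section
/- Let L be a finite lattice, R a commutative ring, and f : L → R any function. Then the determinant of the L×L matrix whose (a,b)-entry is f(a ⊓ b) equals the product over all y ∈ L of p_y, where p_y = ∑_{u ≤ y} μ(u,y)·f(u) and μ denotes the (integer-valued) Möbius function of L. -/
/-!
With `Z` the zeta matrix of `L` (`Z a b = 1` iff `a ≤ b`) and `p` the Möbius transform of `f`,
Möbius inversion gives `f x = ∑_{y ≤ x} p y`, hence
`f (a ⊓ b) = ∑_{y ≤ a, y ≤ b} p y = (Zᵀ * diagonal p * Z) a b`.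
Since `Z` is unitriangular with respect to any linear extension of the order, `det Z = 1`, and
the determinant of the meet matrix is `∏ y, p y`.
-/

open Finset Matrix IncidenceAlgebra

section ZetaMatrix

variable {L R : Type*}

theorem Matrix.det_of_apply_eq_zero_of_not_le [PartialOrder L] [Fintype L] [DecidableEq L]
    [CommRing R] {M : Matrix L L R} (h : ∀ i j, ¬i ≤ j → M i j = 0) :
    M.det = ∏ i, M i i := by
  let _ : Fintype (LinearExtension L) := ‹Fintype L›
  let e : LinearExtension L ≃ L := Equiv.refl L
  have hM : (M.submatrix e e).IsUpperTriangular := fun i j hji =>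
    h _ _ fun hij => (toLinearExtension.monotone hij).not_gt hji
  rw [← det_submatrix_equiv_self e, det_of_isUpperTriangular hM]
  rfl

variable (L R) in
def zetaMatrix [LE L] [DecidableLE L] [Zero R] [One R] : Matrix L L R :=
  of fun a b => if a ≤ b then 1 else 0

theorem det_zetaMatrix [PartialOrder L] [Fintype L] [DecidableEq L] [DecidableLE L]
    [CommRing R] : (zetaMatrix L R).det = 1 := by
  rw [det_of_apply_eq_zero_of_not_le (M := zetaMatrix L R) fun i j hij => if_neg hij]
  exact prod_eq_one fun i _ => if_pos le_rfl

theorem zetaMatrix_transpose_mul_diagonal_mul_zetaMatrix [SemilatticeInf L] [Fintype L]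
    [DecidableEq L] [DecidableLE L] [Semiring R] (g : L → R) :
    (zetaMatrix L R)ᵀ * diagonal g * zetaMatrix L R =
      of fun a b => ∑ y ∈ univ.filter (· ≤ a ⊓ b), g y := by
  ext a b
  rw [Matrix.mul_apply, of_apply, sum_filter]
  refine sum_congr rfl fun y _ => ?_
  simp only [mul_diagonal, transpose_apply, zetaMatrix, of_apply, boole_mul, mul_boole,
    le_inf_iff, and_comm (a := y ≤ a), ite_and]

end ZetaMatrix

section Mobius

variable {L R : Type*} [PartialOrder L] [Fintype L] [DecidableEq L] [DecidableLE L]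
  [LocallyFiniteOrder L] [Ring R]

def mobiusTransform (f : L → R) (y : L) : R :=
  ∑ u ∈ univ.filter (· ≤ y), (mu ℤ u y : R) * f u

theorem sum_mobiusTransform_le (f : L → R) (x : L) :
    ∑ y ∈ univ.filter (· ≤ x), mobiusTransform f y = f x := by
  unfold mobiusTransform
  rw [sum_comm' (t' := univ.filter (· ≤ x)) (s' := fun u => Icc u x)]
  · simp_rw [← sum_mul, ← Int.cast_sum, sum_Icc_mu_right]
    simp
  · intro y u
    simp only [mem_filter, mem_univ, true_and, mem_Icc]
    exact ⟨fun ⟨hyx, huy⟩ => ⟨⟨huy, hyx⟩, huy.trans hyx⟩, fun ⟨h, _⟩ => ⟨h.2, h.1⟩⟩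

end Mobius

/-- **Lindström–Wilf determinant formula.** For a finite lattice `L`, a commutative
ring `R` and any function `f : L → R`, the determinant of the `L × L` matrix with
`(a, b)`-entry `f (a ⊓ b)` equals `∏ y, p_y` where
`p_y = ∑_{u ≤ y} μ(u, y) • f u` and `μ` is the Möbius function of `L`. -/
theorem lindstrom_wilf_det (L R : Type*) [Lattice L] [Fintype L] [DecidableEq L]
    [LocallyFiniteOrder L] [DecidableRel (· ≤ · : L → L → Prop)] [CommRing R] (f : L → R) :
    (Matrix.of fun a b : L => f (a ⊓ b)).det =
      ∏ y : L, ∑ u ∈ Finset.univ.filter (· ≤ y),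
        ((IncidenceAlgebra.mu ℤ u y : ℤ) : R) * f u := by
  have hfactor : (Matrix.of fun a b : L => f (a ⊓ b)) =
      (zetaMatrix L R)ᵀ * diagonal (mobiusTransform f) * zetaMatrix L R := by
    simp only [zetaMatrix_transpose_mul_diagonal_mul_zetaMatrix, sum_mobiusTransform_le]
  rw [hfactor, det_mul, det_mul, det_transpose, det_zetaMatrix, det_diagonal, one_mul, mul_one]
  rfl
end

section
/- Let q be a prime power, V an n-dimensional vector space over 𝔽_q, K a field of characteristic zero, and t ∈ K with t ≠ q^i (cast into K) for every natural number i < n. Then the matrix, indexed by pairs of 𝔽_q-subspaces (U, W) of V, with (U,W)-entry t^{finrank (U ⊓ W)}, has nonzero determinant. -/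
/-!
Writing `g X = ∏_{i < dim X} (t - q^i)`, the entry `t ^ dim (U ⊓ W)` equals
`∑_{X ≤ U ⊓ W} g X`, so the matrix factors as `Zᵀ * diagonal g * Z` with `Z` the zeta matrix of
the subspace lattice, which is unitriangular (Lindström's determinant formula for meet
matrices). Its determinant is `∏_X g X`, and `g X ≠ 0` because `dim X ≤ n`.

The identity `t ^ dim S = ∑_{X ≤ S} g X` is a polynomial identity in `t`, so it suffices to check
it at the infinitely many points `t = q^j`. There the left side counts the linear maps
`S → 𝔽_q^j`; grouped by kernel `X`, the maps with kernel `X` are the injections of `S ⧸ X`, of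
which there are `∏_{i < dim (S ⧸ X)} (q^j - q^i)`. Finally `X ↦ X^⊥` exchanges `dim (S ⧸ X)`
and `dim X`.
-/

open Module Polynomial Finset Submodule

namespace Matrix

section Zeta

variable (P K : Type*) [PartialOrder P] [Fintype P] [DecidableEq P] [DecidableLE P] [CommRing K]

def zeta : Matrix P P K := of fun X U => if X ≤ U then 1 else 0

theorem det_zeta : (zeta P K).det = 1 := by
  have hZ : (zeta P K).BlockTriangular (toLinearExtension : P → LinearExtension P) := by
    intro X U hUX
    rw [zeta, of_apply, if_neg fun hXU => (toLinearExtension.monotone hXU).not_gt hUX]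
  rw [hZ.det]
  refine prod_eq_one fun a _ => ?_
  have hblock : (zeta P K).toSquareBlock toLinearExtension a = 1 := by
    ext ⟨X, hX⟩ ⟨U, hU⟩
    obtain rfl : X = U := hX.trans hU.symm
    simp [toSquareBlock_def, zeta]
  rw [hblock, det_one]

end Zeta

section Lindstrom

variable {P K : Type*} [SemilatticeInf P] [Fintype P] [DecidableEq P] [DecidableLE P] [CommRing K]

theorem of_sum_le_inf_eq_zeta_transpose_mul (g : P → K) :
    of (fun U W => ∑ X ∈ univ.filter (· ≤ U ⊓ W), g X)
      = (zeta P K)ᵀ * diagonal g * zeta P K := by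
  ext U W
  simp only [zeta, mul_apply, diagonal, sum_filter, le_inf_iff, ite_and]
  refine sum_congr rfl fun X _ => ?_
  by_cases hU : X ≤ U <;> by_cases hW : X ≤ W <;> simp [hU, hW]

theorem det_of_apply_inf (f g : P → K) (hfg : ∀ S, ∑ X ∈ univ.filter (· ≤ S), g X = f S) :
    (of fun U W => f (U ⊓ W)).det = ∏ X, g X := by
  simp_rw [← hfg]
  rw [of_sum_le_inf_eq_zeta_transpose_mul, det_mul, det_mul, det_transpose, det_zeta, det_diagonal,
    one_mul, mul_one]

end Lindstrom

end Matrix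

section Ring

variable {R M W : Type*} [Ring R] [AddCommGroup M] [Module R M] [AddCommGroup W] [Module R W]

theorem Module.Basis.injective_constr_iff {ι : Type*} (b : Basis ι R M) (v : ι → W) :
    Function.Injective (b.constr ℕ v) ↔ LinearIndependent R v := by
  refine ⟨fun h => ?_, b.injective_constr_of_linearIndependent⟩
  have hv : b.constr ℕ v ∘ b = v := funext (b.constr_basis ℕ v)
  exact hv ▸ b.linearIndependent.map' _ (LinearMap.ker_eq_bot.2 h)

noncomputable def Module.Basis.linearIndependentEquivInjective {ι : Type*} (b : Basis ι R M) :
    {v : ι → W // LinearIndependent R v} ≃ {f : M →ₗ[R] W // Function.Injective f} :=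
  (b.constr ℕ).toEquiv.subtypeEquiv fun v => (b.injective_constr_iff v).symm

theorem LinearMap.ker_comp_mkQ_of_injective {X : Submodule R M} {g : (M ⧸ X) →ₗ[R] W}
    (hg : Function.Injective g) : ker (g ∘ₗ X.mkQ) = X := by
  rw [ker_comp, ker_eq_bot.2 hg, Submodule.comap_bot, Submodule.ker_mkQ]

variable (R M W) in
noncomputable def LinearMap.sigmaInjectiveQuotientEquiv :
    (Σ X : Submodule R M, {g : (M ⧸ X) →ₗ[R] W // Function.Injective g}) ≃ (M →ₗ[R] W) :=
  Equiv.ofBijective (fun p => p.2.1 ∘ₗ p.1.mkQ) <| by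
    refine ⟨?_, fun f => ⟨⟨ker f, (ker f).liftQ f le_rfl, ?_⟩, (ker f).liftQ_mkQ f le_rfl⟩⟩
    · rintro ⟨X, g, hg⟩ ⟨X', g', hg'⟩ h
      obtain rfl : X = X' := by
        rw [← ker_comp_mkQ_of_injective hg, ← ker_comp_mkQ_of_injective hg']
        exact congrArg ker h
      simpa using (cancel_right X.mkQ_surjective).1 h
    · exact ker_eq_bot.1 ((ker f).ker_liftQ_eq_bot' f rfl)

end Ring

theorem Submodule.sum_finrank_quotient_eq_sum_finrank {F M β : Type*} [Field F] [AddCommGroup M]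
    [Module F M] [FiniteDimensional F M] [Fintype (Submodule F M)] [AddCommMonoid β] (u : ℕ → β) :
    ∑ X : Submodule F M, u (finrank F (M ⧸ X)) = ∑ X : Submodule F M, u (finrank F X) := by
  let ψ : M ≃ₗ[F] Dual F M := (Free.chooseBasis F M).toDualEquiv
  let e : Submodule F M ≃ Submodule F M :=
    (Subspace.orderIsoFiniteDimensional.toEquiv.trans OrderDual.ofDual).trans
      (orderIsoMapComap ψ).symm.toEquiv
  refine Fintype.sum_equiv e _ _ fun X => congrArg u ?_
  change _ = finrank F ((orderIsoMapComap ψ).symm X.dualAnnihilator)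
  rw [orderIsoMapComap_symm_apply', LinearEquiv.finrank_map_eq]
  exact (Subspace.quotEquivAnnihilator X).finrank_eq

section FiniteField

variable {F : Type*} [Field F] [Fintype F] {K : Type*} [CommRing K]
variable {M N W : Type*} [AddCommGroup M] [Module F M] [FiniteDimensional F M]
  [AddCommGroup N] [Module F N] [FiniteDimensional F N]
  [AddCommGroup W] [Module F W] [FiniteDimensional F W]

local notation "q" => Fintype.card F

theorem natCast_card_injective_linearMap :
    (Nat.card {f : N →ₗ[F] W // Function.Injective f} : K)
      = ∏ i ∈ range (finrank F N), ((q : K) ^ finrank F W - q ^ i) := by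
  have : Finite W := Module.finite_of_finite F
  rcases le_or_gt (finrank F N) (finrank F W) with hle | hlt
  · rw [← Nat.card_congr (finBasis F N).linearIndependentEquivInjective,
      card_linearIndependent hle, Nat.cast_prod, prod_range]
    refine prod_congr rfl fun i _ => ?_
    rw [Nat.cast_sub (Nat.pow_le_pow_right Fintype.card_pos (i.2.le.trans hle))]
    push_cast
    rfl
  · have : IsEmpty {f : N →ₗ[F] W // Function.Injective f} :=
      ⟨fun f => hlt.not_ge (LinearMap.finrank_le_finrank_of_injective f.2)⟩
    rw [Nat.card_of_isEmpty, Nat.cast_zero, eq_comm]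
    exact prod_eq_zero (mem_range.2 hlt) (sub_self _)

theorem pow_finrank_linearMap_eq_sum_quotient [Fintype (Submodule F M)] :
    ((q : K) ^ finrank F W) ^ finrank F M
      = ∑ X : Submodule F M, ∏ i ∈ range (finrank F (M ⧸ X)), ((q : K) ^ finrank F W - q ^ i) := by
  have hcard : Nat.card (M →ₗ[F] W) = (q ^ finrank F W) ^ finrank F M := by
    rw [natCard_eq_pow_finrank (K := F), Nat.card_eq_fintype_card, finrank_linearMap,
      ← pow_mul, mul_comm]
  have (X : Submodule F M) : Finite ((M ⧸ X) →ₗ[F] W) := Module.finite_of_finite F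
  rw [← Nat.card_congr (LinearMap.sigmaInjectiveQuotientEquiv F M W), Nat.card_sigma] at hcard
  simp_rw [← natCast_card_injective_linearMap, ← Nat.cast_pow, ← hcard, Nat.cast_sum]

theorem sum_prod_pow_sub_pow_finrank_eq_pow [Fintype (Submodule F M)] :
    ∑ X : Submodule F M, ∏ i ∈ range (finrank F X), ((q : K) ^ finrank F W - q ^ i)
      = ((q : K) ^ finrank F W) ^ finrank F M := by
  rw [pow_finrank_linearMap_eq_sum_quotient,
    sum_finrank_quotient_eq_sum_finrank fun d => ∏ i ∈ range d, ((q : K) ^ finrank F W - q ^ i)]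

theorem sum_prod_sub_pow_finrank_eq_pow [IsDomain K] [CharZero K] [Fintype (Submodule F M)]
    (t : K) :
    ∑ X : Submodule F M, ∏ i ∈ range (finrank F X), (t - (q : K) ^ i) = t ^ finrank F M := by
  let p : K[X] := ∑ X : Submodule F M, ∏ i ∈ range (finrank F X), (Polynomial.X - C ((q : K) ^ i))
  have hp_eval (s : K) :
      p.eval s = ∑ X : Submodule F M, ∏ i ∈ range (finrank F X), (s - (q : K) ^ i) := by
    simp [p, eval_finsetSum, eval_prod]
  have hp_eval_pow (j : ℕ) : p.eval ((q : K) ^ j) = ((q : K) ^ j) ^ finrank F M := by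
    simpa [hp_eval] using
      sum_prod_pow_sub_pow_finrank_eq_pow (F := F) (K := K) (M := M) (W := Fin j → F)
  have hpow_injective : Function.Injective fun j : ℕ => (q : K) ^ j := fun a b hab =>
    Nat.pow_right_injective (Fintype.one_lt_card (α := F)) <| by
      simp only at hab ⊢
      exact_mod_cast hab
  have hp : p = X ^ finrank F M := eq_of_infinite_eval_eq _ _ <|
    Set.infinite_of_injective_forall_mem hpow_injective fun j => by simp [hp_eval_pow]
  rw [← hp_eval, hp, eval_pow, eval_X]

theorem Submodule.sum_le_prod_sub_pow_finrank_eq_pow [IsDomain K] [CharZero K]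
    [Fintype (Submodule F M)] (S : Submodule F M) [DecidablePred (· ≤ S)] (t : K) :
    ∑ X ∈ univ.filter (· ≤ S), ∏ i ∈ range (finrank F X), (t - (q : K) ^ i) = t ^ finrank F S := by
  have : Finite S := Module.finite_of_finite F
  have : Fintype (Submodule F S) := Fintype.ofFinite _
  rw [← sum_prod_sub_pow_finrank_eq_pow, sum_subtype (p := (· ≤ S)) _ (by simp)
    fun X : Submodule F M => ∏ i ∈ range (finrank F X), (t - (q : K) ^ i)]
  exact (Fintype.sum_equiv (MapSubtype.orderIso S).toEquiv _ _ fun X => by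
    change _ = ∏ i ∈ range (finrank F (X.map S.subtype)), _
    rw [finrank_map_subtype_eq]).symm

end FiniteField

theorem det_subspace_intersection_matrix_ne_zero_general (q : ℕ)
    (F : Type*) [Field F] [Fintype F] (hFq : Fintype.card F = q)
    (V : Type*) [AddCommGroup V] [Module F V] [FiniteDimensional F V]
    (n : ℕ) (hV : finrank F V = n)
    [Fintype (Submodule F V)] [DecidableEq (Submodule F V)]
    (K : Type*) [Field K] [CharZero K] (t : K)
    (ht : ∀ i : ℕ, i < n → t ≠ (q : K) ^ i) :
    (Matrix.of fun U W : Submodule F V => t ^ finrank F (U ⊓ W : Submodule F V)).det ≠ 0 := by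
  classical
  subst hFq hV
  rw [Matrix.det_of_apply_inf _
    (fun X : Submodule F V => ∏ i ∈ range (finrank F X), (t - (Fintype.card F : K) ^ i))
    fun S => sum_le_prod_sub_pow_finrank_eq_pow S t]
  exact prod_ne_zero_iff.2 fun X _ => prod_ne_zero_iff.2 fun i hi =>
    sub_ne_zero.2 (ht i ((mem_range.1 hi).trans_le X.finrank_le))

/-- For an `n`-dimensional vector space `V` over the finite field `F = 𝔽_q` (`q` a prime
power), a field `K` of characteristic zero and `t ∈ K` with `t ≠ q^i` for all `i < n`,
the matrix indexed by pairs of subspaces of `V` with `(U, W)`-entry `t ^ dim (U ⊓ W)`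
has nonzero determinant. -/
theorem det_subspace_intersection_matrix_ne_zero (q : ℕ) (hq : IsPrimePow q)
    (F : Type*) [Field F] [Fintype F] (hFq : Fintype.card F = q)
    (V : Type*) [AddCommGroup V] [Module F V] [FiniteDimensional F V]
    (n : ℕ) (hV : finrank F V = n)
    [Fintype (Submodule F V)] [DecidableEq (Submodule F V)]
    (K : Type*) [Field K] [CharZero K] (t : K)
    (ht : ∀ i : ℕ, i < n → t ≠ (q : K) ^ i) :
    (Matrix.of fun U W : Submodule F V => t ^ finrank F (U ⊓ W : Submodule F V)).det ≠ 0 :=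
  det_subspace_intersection_matrix_ne_zero_general q F hFq V n hV K t ht
end

section
/- Let p be a prime, G a finite abelian p-group, and m a subgroup of G with Nat.card m = p. Let α be the number of subgroups of G that are lattice complements of m (i.e. the cardinality of {H : Subgroup G // IsCompl H m}). Then for every field K of characteristic zero and every t ∈ K: ∑_{A ≤ G} μ(A, ⊤)·t^{ℓ(A)} = (t − α) · ∑_{B ≤ G/m} μ(B, ⊤)·t^{ℓ(B)}, where the first sum runs over all subgroups of G, the second over all subgroups of the quotient group G ⧸ m, μ denotes in each case the Möbius function of the respective subgroup lattice, and ℓ(H) is the exponent of p in Nat.card H. -/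
/-!
By Möbius inversion over the subgroup lattice (P. Hall), `φ_G(s) = ∑_{A ≤ G} μ(A, G) |A|^s`
counts the `s`-tuples generating `G`; for a `p`-group this is the polynomial
`∑_{A ≤ G} μ(A, G) X^{ℓ(A)}` evaluated at `X = p^s`. A tuple of `G` generates `G` modulo `m`
iff the subgroup `H` it generates satisfies `H ⊔ m = G`; as `m` is an atom, this means `H = G`
or `IsCompl H m`, and every complement of `m` is isomorphic to `G ⧸ m`. Counting lifts of the
generating tuples of `G ⧸ m` therefore gives `p^s φ_{G/m}(s) = φ_G(s) + α φ_{G/m}(s)` for all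
`s`, so the two polynomials agree at the infinitely many points `p^s` and are equal.
-/

open Finset Subgroup Polynomial

lemma Nat.card_subtype_comp_eq_sum_card_fiber {X Y : Type*} [Finite X] [Fintype Y] (f : X → Y)
    (P : Y → Prop) [DecidablePred P] :
    Nat.card {x // P (f x)} = ∑ y ∈ univ.filter P, Nat.card {x // f x = y} := by
  rw [← Nat.card_congr (Equiv.sigmaSubtypeFiberEquivSubtype f fun _ => Iff.rfl), Nat.card_sigma]
  exact (sum_subtype _ (by simp) fun y => Nat.card {x // f x = y}).symm

lemma IsAtom.sup_eq_top_iff {α : Type*} [Lattice α] [BoundedOrder α] {a b : α} (ha : IsAtom a) :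
    b ⊔ a = ⊤ ↔ b = ⊤ ∨ IsCompl b a := by
  refine ⟨fun h => ?_, ?_⟩
  · by_cases hba : Disjoint b a
    · exact Or.inr ⟨hba, codisjoint_iff.2 h⟩
    · rw [disjoint_comm, ha.not_disjoint_iff_le] at hba
      exact Or.inl (by rwa [sup_eq_left.2 hba] at h)
  · rintro (rfl | h)
    · exact top_sup_eq a
    · exact h.sup_eq_top

lemma Subgroup.isAtom_of_card_prime {G : Type*} [Group G] {m : Subgroup G}
    (hm : (Nat.card m).Prime) : IsAtom m := by
  have : Finite m := Nat.finite_of_card_ne_zero hm.ne_zero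
  refine ⟨fun h => by simp [h, Nat.not_prime_one] at hm, fun B hB => ?_⟩
  rcases hm.eq_one_or_self_of_dvd _ (card_dvd_of_le hB.le) with h1 | hBm
  · exact eq_bot_of_card_eq B h1
  · exact absurd (eq_of_le_of_card_ge hB.le hBm.ge) hB.ne

lemma IsPGroup.card_eq_pow_factorization {p : ℕ} [Fact p.Prime] {G : Type*} [Group G] [Finite G]
    (hG : IsPGroup p G) : Nat.card G = p ^ (Nat.card G).factorization p := by
  obtain ⟨n, hn⟩ := IsPGroup.iff_card.1 hG
  rw [hn, Nat.Prime.factorization_pow Fact.out, Finsupp.single_eq_same]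

/-- Hall's Eulerian function `φ_G(s)`. -/
noncomputable def numGeneratingTuples (G : Type*) [Group G] (s : ℕ) : ℕ :=
  Nat.card {v : Fin s → G // closure (Set.range v) = ⊤}

section Generation

variable {G G' : Type*} [Group G] [Group G'] {s : ℕ}

lemma Subgroup.closure_range_comp (f : G →* G') (v : Fin s → G) :
    closure (Set.range (f ∘ v)) = (closure (Set.range v)).map f := by
  rw [MonoidHom.map_closure, Set.range_comp]

lemma numGeneratingTuples_congr (e : G ≃* G') (s : ℕ) :
    numGeneratingTuples G s = numGeneratingTuples G' s := by
  refine Nat.card_congr <|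
    Equiv.subtypeEquiv (Equiv.piCongrRight fun _ => e.toEquiv) fun v => ?_
  change _ ↔ closure (Set.range ((e : G →* G') ∘ v)) = ⊤
  rw [closure_range_comp, ← map_equiv_top e, (map_injective e.injective).eq_iff]

lemma card_closure_range_eq (H : Subgroup G) (s : ℕ) :
    Nat.card {v : Fin s → G // closure (Set.range v) = H} = numGeneratingTuples H s := by
  have closure_coe (w : Fin s → H) :
      closure (Set.range (H.subtype ∘ w)) = (closure (Set.range w)).map H.subtype :=
    closure_range_comp H.subtype w
  refine Nat.card_congr
    { toFun := fun v =>
        ⟨fun i => ⟨v.1 i, v.2.le (subset_closure (Set.mem_range_self i))⟩, ?_⟩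
      invFun := fun w => ⟨H.subtype ∘ w.1, ?_⟩
      left_inv := fun v => rfl
      right_inv := fun w => rfl }
  · apply map_injective H.subtype_injective
    rw [← closure_coe, ← MonoidHom.range_eq_map, range_subtype]
    exact v.2
  · rw [closure_coe, w.2, ← MonoidHom.range_eq_map, range_subtype]

end Generation

section Hall

variable {G : Type*} [Group G] [Finite G] [Fintype (Subgroup G)] [LocallyFiniteOrder (Subgroup G)]

lemma card_pow_eq_sum_card_closure_range_eq (A : Subgroup G) (s : ℕ) :
    Nat.card A ^ s = ∑ B ∈ Iic A, Nat.card {v : Fin s → G // closure (Set.range v) = B} := by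
  classical
  have tuples_in_A : (Fin s → A) ≃ {v : Fin s → G // closure (Set.range v) ≤ A} :=
    (Equiv.subtypePiEquivPi (p := fun _ g => g ∈ A)).symm.trans <|
      Equiv.subtypeEquivRight fun v => by simp [closure_le, Set.range_subset_iff]
  have card_tuples : Nat.card (Fin s → A) = Nat.card A ^ s := by simp [Nat.card_fun]
  rw [← card_tuples, Nat.card_congr tuples_in_A, Nat.card_subtype_comp_eq_sum_card_fiber
    (fun v : Fin s → G => closure (Set.range v)) (· ≤ A), filter_ge_eq_Iic]

theorem sum_mu_mul_card_pow_eq_numGeneratingTuples [DecidableEq (Subgroup G)] (s : ℕ) :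
    ∑ A : Subgroup G, IncidenceAlgebra.mu ℤ A ⊤ * (Nat.card A : ℤ) ^ s =
      numGeneratingTuples G s := by
  have h := IncidenceAlgebra.moebius_inversion_bot
    (fun B => (Nat.card {v : Fin s → G // closure (Set.range v) = B} : ℤ))
    (fun A => (Nat.card A : ℤ) ^ s)
    (fun A => by exact_mod_cast card_pow_eq_sum_card_closure_range_eq A s) ⊤
  rw [Iic_top] at h
  exact h.symm

end Hall

section Quotient

variable {G : Type*} [Group G] (N : Subgroup G) [N.Normal]

lemma QuotientGroup.map_mk'_eq_top_iff (A : Subgroup G) :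
    A.map (QuotientGroup.mk' N) = ⊤ ↔ A ⊔ N = ⊤ := by
  rw [← (comap_injective (QuotientGroup.mk'_surjective N)).eq_iff, comap_map_eq,
    QuotientGroup.ker_mk', comap_top]

lemma card_fiber_comp_mk' {s : ℕ} (w : Fin s → G ⧸ N) :
    Nat.card {v : Fin s → G // QuotientGroup.mk' N ∘ v = w} = Nat.card N ^ s := by
  have fiber_equiv : {v : Fin s → G // QuotientGroup.mk' N ∘ v = w} ≃
      ∀ i, (QuotientGroup.mk ⁻¹' {w i} : Set G) :=
    (Equiv.subtypeEquivRight fun v => funext_iff).trans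
      (Equiv.subtypePiEquivPi (p := fun i g => g ∈ (QuotientGroup.mk ⁻¹' {w i} : Set G)))
  simp only [Nat.card_congr fiber_equiv, Nat.card_pi, QuotientGroup.card_preimage_mk,
    Nat.card_unique, mul_one, prod_const, card_univ, Fintype.card_fin]

lemma card_pow_mul_numGeneratingTuples_quotient [Finite G] (s : ℕ) :
    Nat.card N ^ s * numGeneratingTuples (G ⧸ N) s =
      Nat.card {v : Fin s → G // closure (Set.range v) ⊔ N = ⊤} := by
  classical
  have := Fintype.ofFinite (Fin s → G ⧸ N)
  have generates_mod_N (v : Fin s → G) :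
      closure (Set.range v) ⊔ N = ⊤ ↔
        closure (Set.range (QuotientGroup.mk' N ∘ v)) = ⊤ := by
    rw [closure_range_comp, QuotientGroup.map_mk'_eq_top_iff]
  rw [Nat.card_congr (Equiv.subtypeEquivRight generates_mod_N),
    Nat.card_subtype_comp_eq_sum_card_fiber (QuotientGroup.mk' N ∘ ·)
      (fun w => closure (Set.range w) = ⊤),
    sum_congr rfl fun w _ => card_fiber_comp_mk' N w, sum_const, smul_eq_mul, mul_comm,
    numGeneratingTuples, Nat.card_eq_fintype_card, Fintype.card_subtype]

variable {N} in
noncomputable def IsCompl.mulEquivQuotient {A : Subgroup G} (h : IsCompl A N) : A ≃* G ⧸ N :=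
  (isComplement'_of_disjoint_and_mul_eq_univ h.disjoint
    (by rw [← mul_normal, h.sup_eq_top, coe_top])).QuotientMulEquiv.symm

theorem card_pow_mul_numGeneratingTuples_quotient_of_isAtom [Finite G] (hN : IsAtom N)
    (s : ℕ) :
    Nat.card N ^ s * numGeneratingTuples (G ⧸ N) s =
      numGeneratingTuples G s + Nat.card {A : Subgroup G // IsCompl A N} *
        numGeneratingTuples (G ⧸ N) s := by
  classical
  have := Fintype.ofFinite (Subgroup G)
  have sup_eq_top : univ.filter (· ⊔ N = ⊤) = insert ⊤ (univ.filter (IsCompl · N)) := by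
    ext A
    simp [hN.sup_eq_top_iff]
  have top_not_compl : ⊤ ∉ univ.filter (IsCompl · N) := by
    simpa using fun h => hN.ne_bot (eq_bot_of_top_isCompl h)
  have card_compl (A : Subgroup G) (hA : A ∈ univ.filter (IsCompl · N)) :
      Nat.card {v : Fin s → G // closure (Set.range v) = A} =
        numGeneratingTuples (G ⧸ N) s := by
    rw [card_closure_range_eq, numGeneratingTuples_congr (mem_filter.1 hA).2.mulEquivQuotient]
  rw [card_pow_mul_numGeneratingTuples_quotient, Nat.card_subtype_comp_eq_sum_card_fiber
      (fun v : Fin s → G => closure (Set.range v)) (· ⊔ N = ⊤),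
    sup_eq_top, sum_insert top_not_compl, sum_congr rfl card_compl, sum_const, smul_eq_mul,
    card_closure_range_eq, numGeneratingTuples_congr topEquiv, Nat.card_eq_fintype_card,
    Fintype.card_subtype]

end Quotient

section MobiusPolynomial

variable (p : ℕ) (G : Type*) [Group G]
  [Fintype (Subgroup G)] [DecidableEq (Subgroup G)] [LocallyFiniteOrder (Subgroup G)]

noncomputable def subgroupMobiusPoly : ℤ[X] :=
  ∑ A : Subgroup G, C (IncidenceAlgebra.mu ℤ A ⊤) * X ^ (Nat.card A).factorization p

variable {p G}

lemma eval_pow_subgroupMobiusPoly [Fact p.Prime] [Finite G] (hG : IsPGroup p G) (s : ℕ) :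
    (subgroupMobiusPoly p G).eval ((p : ℤ) ^ s) = numGeneratingTuples G s := by
  rw [← sum_mu_mul_card_pow_eq_numGeneratingTuples, subgroupMobiusPoly, eval_finsetSum]
  refine sum_congr rfl fun A _ => ?_
  rw [eval_mul, eval_C, eval_pow, eval_X, ← pow_mul, mul_comm s, pow_mul, ← Nat.cast_pow,
    ← (hG.to_subgroup A).card_eq_pow_factorization]

end MobiusPolynomial

theorem subgroupMobiusPoly_eq_mul_quotient {p : ℕ} (hp : p.Prime) {G : Type*} [Group G]
    [Finite G] (hG : IsPGroup p G) (m : Subgroup G) [m.Normal] (hm : Nat.card m = p)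
    [Fintype (Subgroup G)] [DecidableEq (Subgroup G)] [LocallyFiniteOrder (Subgroup G)]
    [Fintype (Subgroup (G ⧸ m))] [DecidableEq (Subgroup (G ⧸ m))]
    [LocallyFiniteOrder (Subgroup (G ⧸ m))] :
    subgroupMobiusPoly p G =
      (X - C (Nat.card {H : Subgroup G // IsCompl H m} : ℤ)) *
        subgroupMobiusPoly p (G ⧸ m) := by
  have := Fact.mk hp
  have agree_at_pow (s : ℕ) : (subgroupMobiusPoly p G).eval ((p : ℤ) ^ s) =
      ((X - C (Nat.card {H : Subgroup G // IsCompl H m} : ℤ)) *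
        subgroupMobiusPoly p (G ⧸ m)).eval ((p : ℤ) ^ s) := by
    have count := card_pow_mul_numGeneratingTuples_quotient_of_isAtom m
      (isAtom_of_card_prime (hm ▸ hp)) s
    rw [hm] at count
    simp only [eval_mul, eval_sub, eval_X, eval_C, eval_pow_subgroupMobiusPoly hG,
      eval_pow_subgroupMobiusPoly (hG.to_quotient m)]
    zify at count
    linear_combination -count
  refine eq_of_infinite_eval_eq _ _ (Set.infinite_of_injective_forall_mem
    (f := fun s : ℕ => (p : ℤ) ^ s) ?_ agree_at_pow)
  exact fun a b hab => Nat.pow_right_injective hp.two_le (Nat.cast_injective (R := ℤ) hab)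

theorem stanley_factorization_subgroup_lattice_general (p : ℕ) (hp : p.Prime)
    (G : Type*) [CommGroup G] [Finite G] (hG : IsPGroup p G)
    (m : Subgroup G) (hm : Nat.card m = p)
    [Fintype (Subgroup G)] [DecidableEq (Subgroup G)] [LocallyFiniteOrder (Subgroup G)]
    [Fintype (Subgroup (G ⧸ m))] [DecidableEq (Subgroup (G ⧸ m))]
    [LocallyFiniteOrder (Subgroup (G ⧸ m))]
    (K : Type*) [Field K] (t : K) :
    ∑ A : Subgroup G,
        ((IncidenceAlgebra.mu ℤ A (⊤ : Subgroup G) : ℤ) : K)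
          * t ^ ((Nat.card A).factorization p) =
      (t - (Nat.card {H : Subgroup G // IsCompl H m} : K)) *
        ∑ B : Subgroup (G ⧸ m),
          ((IncidenceAlgebra.mu ℤ B (⊤ : Subgroup (G ⧸ m)) : ℤ) : K)
            * t ^ ((Nat.card B).factorization p) := by
  have h := congrArg (aeval t) (subgroupMobiusPoly_eq_mul_quotient hp hG m hm)
  simpa [subgroupMobiusPoly] using h

/-- **Stanley's modular-element factorization** for the subgroup lattice of a finite
abelian `p`-group `G`: if `m ≤ G` has order `p` and `α` is the number of lattice
complements of `m` in `G`, then for every field `K` of characteristic zero and `t ∈ K`,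
`∑_{A ≤ G} μ(A, ⊤) t^{ℓ(A)} = (t - α) · ∑_{B ≤ G/m} μ(B, ⊤) t^{ℓ(B)}`,
where `ℓ(H) = (Nat.card H).factorization p`. -/
theorem stanley_factorization_subgroup_lattice (p : ℕ) (hp : p.Prime)
    (G : Type*) [CommGroup G] [Finite G] (hG : IsPGroup p G)
    (m : Subgroup G) (hm : Nat.card m = p)
    [Fintype (Subgroup G)] [DecidableEq (Subgroup G)] [LocallyFiniteOrder (Subgroup G)]
    [Fintype (Subgroup (G ⧸ m))] [DecidableEq (Subgroup (G ⧸ m))]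
    [LocallyFiniteOrder (Subgroup (G ⧸ m))]
    (K : Type*) [Field K] [CharZero K] (t : K) :
    ∑ A : Subgroup G,
        ((IncidenceAlgebra.mu ℤ A (⊤ : Subgroup G) : ℤ) : K)
          * t ^ ((Nat.card A).factorization p) =
      (t - (Nat.card {H : Subgroup G // IsCompl H m} : K)) *
        ∑ B : Subgroup (G ⧸ m),
          ((IncidenceAlgebra.mu ℤ B (⊤ : Subgroup (G ⧸ m)) : ℤ) : K)
            * t ^ ((Nat.card B).factorization p) :=
  stanley_factorization_subgroup_lattice_general p hp G hG m hm K t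
end

section
/- Let 𝒞 be an abelian category in which every object has only finitely many subobjects (i.e. Subobject z is finite for every object z). Let y be an object of 𝒞 and let m be a subobject of y whose underlying object is simple. Then the number of subobjects w of y with IsCompl w m in the lattice Subobject y is either 0 or a power Nat.card(End M)^k for some natural number k, where M denotes the underlying object of m and End M its endomorphism monoid. -/
/-!
Sending a retraction `r` of `m ↪ y` to `kernelSubobject r` is a bijection onto the complements
of `m`: a complement `w` comes from the retraction `y ↠ y / w ≅ m`. Once one retraction `r₀`
exists, every other one is `r₀ + π ≫ t` for a unique `t : y / m ⟶ m`, and by Schur's lemma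
`y / m ⟶ m` is a vector space over the division ring `End m`; it is finite because it embeds,
via graphs, into the subobjects of `(y / m) ⊞ m`.
-/

open CategoryTheory CategoryTheory.Limits

namespace CategoryTheory

variable {C : Type*} [Category C]

section Preadditive

variable [Preadditive C]

lemma finite_hom_of_finite_subobject [HasBinaryBiproducts C] {X Y : C}
    (h : Finite (Subobject (X ⊞ Y))) : Finite (X ⟶ Y) := by
  have (f : X ⟶ Y) : Mono (biprod.lift (𝟙 X) f) := mono_of_mono_fac (biprod.lift_fst (𝟙 X) f)
  refine Finite.of_injective (fun f : X ⟶ Y ↦ Subobject.mk (biprod.lift (𝟙 X) f)) ?_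
  intro f g hfg
  have hcomp := Subobject.ofMkLEMk_comp hfg.le
  have hid : Subobject.ofMkLEMk _ _ hfg.le = 𝟙 X := by
    simpa only [Category.assoc, biprod.lift_fst, Category.comp_id] using hcomp =≫ biprod.fst
  simpa [hid] using (hcomp =≫ biprod.snd).symm

noncomputable def SplitMono.cokernelHomEquiv {X Y : C} {f : X ⟶ Y} [HasCokernel f]
    (s₀ : SplitMono f) :
    (cokernel f ⟶ X) ≃ SplitMono f where
  toFun t := ⟨s₀.retraction + cokernel.π f ≫ t, by simp⟩
  invFun s := cokernel.desc f (s.retraction - s₀.retraction) (by simp)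
  left_inv t := by ext; simp
  right_inv s := by ext; simp

end Preadditive

section Abelian

variable [Abelian C] {y : C} {m : Subobject y}

lemma SplitMono.factors_kernelSubobject_retraction (s : SplitMono m.arrow) :
    (kernelSubobject s.retraction).Factors (𝟙 y - s.retraction ≫ m.arrow) :=
  kernelSubobject_factors _ _ (by simp)

lemma SplitMono.isCompl_kernelSubobject_retraction (s : SplitMono m.arrow) :
    IsCompl (kernelSubobject s.retraction) m := by
  refine IsCompl.of_eq ?_ ?_
  · set P := kernelSubobject s.retraction ⊓ m
    have hP : P.arrow = Subobject.ofLE P m inf_le_right ≫ m.arrow := (Subobject.ofLE_arrow _).symm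
    have hzero : P.arrow ≫ s.retraction = 0 := by
      rw [← Subobject.ofLE_arrow (inf_le_left : P ≤ _), Category.assoc,
        kernelSubobject_arrow_comp, comp_zero]
    have hι : Subobject.ofLE P m inf_le_right = 0 := by
      rwa [hP, Category.assoc, s.id, Category.comp_id] at hzero
    rw [← Subobject.mk_arrow P, Subobject.mk_eq_bot_iff_zero, hP, hι, zero_comp]
  · have hid : (kernelSubobject s.retraction ⊔ m).Factors (𝟙 y) := by
      rw [← sub_add_cancel (𝟙 y) (s.retraction ≫ m.arrow)]
      exact Subobject.factors_add _ _
        (Subobject.factors_of_le _ le_sup_left (s.factors_kernelSubobject_retraction))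
        (Subobject.factors_of_le _ le_sup_right (Subobject.factors_comp_arrow _))
    have : IsSplitEpi (kernelSubobject s.retraction ⊔ m).arrow :=
      ⟨⟨⟨_, Subobject.factorThru_arrow _ _ hid⟩⟩⟩
    have : IsIso (kernelSubobject s.retraction ⊔ m).arrow := isIso_of_mono_of_epi _
    exact Subobject.eq_top_of_isIso_arrow _

lemma SplitMono.ext_of_kernelSubobject_eq {s t : SplitMono m.arrow}
    (h : kernelSubobject s.retraction = kernelSubobject t.retraction) : s = t := by
  have hvanish : (𝟙 y - s.retraction ≫ m.arrow) ≫ t.retraction = 0 := by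
    have hfac := s.factors_kernelSubobject_retraction
    rw [h] at hfac
    rw [← Subobject.factorThru_arrow _ _ hfac, Category.assoc, kernelSubobject_arrow_comp,
      comp_zero]
  refine SplitMono.ext (sub_eq_zero.mp ?_).symm
  simpa [t.id] using hvanish

lemma kernelSubobject_cokernel_π_arrow (w : Subobject y) :
    kernelSubobject (cokernel.π w.arrow) = w :=
  le_antisymm
    (Subobject.le_of_comm (Abelian.monoLift w.arrow _ (kernelSubobject_arrow_comp _))
      (Abelian.monoLift_comp _ _ _))
    (le_kernelSubobject _ _ (cokernel.condition _))

lemma isIso_arrow_comp_cokernel_π_of_isCompl {w : Subobject y} (hw : IsCompl w m) :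
    IsIso (m.arrow ≫ cokernel.π w.arrow) := by
  have : Mono (m.arrow ≫ cokernel.π w.arrow) := by
    refine Preadditive.mono_of_cancel_zero _ fun g hg ↦ ?_
    have hwg : w.Factors (g ≫ m.arrow) := by
      rw [← kernelSubobject_cokernel_π_arrow w]
      exact kernelSubobject_factors _ _ (by simpa using hg)
    have hbot : (⊥ : Subobject y).Factors (g ≫ m.arrow) := by
      rw [← hw.inf_eq_bot]
      exact (Subobject.inf_factors _).mpr ⟨hwg, Subobject.factors_comp_arrow g⟩
    rw [Subobject.bot_factors_iff_zero] at hbot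
    exact (cancel_mono m.arrow).mp (by rw [hbot, zero_comp])
  have : Epi (m.arrow ≫ cokernel.π w.arrow) := by
    refine Preadditive.epi_of_cancel_zero _ fun h hh ↦ ?_
    have htop : kernelSubobject (cokernel.π w.arrow ≫ h) = ⊤ := by
      rw [eq_top_iff, ← hw.sup_eq_top]
      exact sup_le (le_kernelSubobject _ _ (by simp))
        (le_kernelSubobject _ _ (by simpa using hh))
    have hzero : cokernel.π w.arrow ≫ h = 0 := by
      have harrow := kernelSubobject_arrow_comp (cokernel.π w.arrow ≫ h)
      rw [htop] at harrow
      exact (cancel_epi (⊤ : Subobject y).arrow).mp (by rw [harrow, comp_zero])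
    exact zero_of_epi_comp _ hzero
  exact isIso_of_mono_of_epi _

lemma exists_splitMono_kernelSubobject_eq_of_isCompl {w : Subobject y} (hw : IsCompl w m) :
    ∃ s : SplitMono m.arrow, kernelSubobject s.retraction = w := by
  have := isIso_arrow_comp_cokernel_π_of_isCompl hw
  refine ⟨⟨cokernel.π w.arrow ≫ inv (m.arrow ≫ cokernel.π w.arrow),
    by rw [← Category.assoc, IsIso.hom_inv_id]⟩, ?_⟩
  rw [kernelSubobject_comp_mono, kernelSubobject_cokernel_π_arrow]

variable (m) in
noncomputable def splitMonoEquivIsCompl : SplitMono m.arrow ≃ {w : Subobject y // IsCompl w m} :=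
  Equiv.ofBijective (fun s ↦ ⟨_, s.isCompl_kernelSubobject_retraction⟩)
    ⟨fun _ _ h ↦ SplitMono.ext_of_kernelSubobject_eq (congrArg Subtype.val h),
      fun ⟨_, hw⟩ ↦ (exists_splitMono_kernelSubobject_eq_of_isCompl hw).imp
        fun _ h ↦ Subtype.ext h⟩

end Abelian

end CategoryTheory

/-- In an abelian category whose every object has only finitely many subobjects, the
number of lattice complements of a simple subobject `m` of an object `y` is either `0`
or a power of the cardinality of the endomorphism ring of (the underlying object of)
`m`. -/
theorem card_complements_of_simple_subobject (C : Type*) [Category C] [Abelian C]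
    (hfin : ∀ z : C, Finite (Subobject z)) (y : C) (m : Subobject y)
    (hm : Simple (m : C)) :
    Nat.card {w : Subobject y // IsCompl w m} = 0 ∨
      ∃ k : ℕ, Nat.card {w : Subobject y // IsCompl w m} = Nat.card (End (m : C)) ^ k := by
  rw [← Nat.card_congr (splitMonoEquivIsCompl m)]
  rcases isEmpty_or_nonempty (SplitMono m.arrow) with _ | ⟨⟨s₀⟩⟩
  · exact Or.inl Nat.card_of_isEmpty
  · have := finite_hom_of_finite_subobject (hfin (cokernel m.arrow ⊞ (m : C)))
    exact Or.inr ⟨_, (Nat.card_congr s₀.cokernelHomEquiv).symm.trans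
      Module.natCard_eq_pow_finrank⟩
end

section
/- Let 𝒞 be an abelian category in which every object has only finitely many subobjects, i.e. Subobject z is a finite type for every object z of 𝒞. Then for all objects x, y of 𝒞 the Hom-group (x ⟶ y) is finite. -/
open CategoryTheory CategoryTheory.Limits

/-! A morphism `f : x ⟶ y` is recovered from its graph `⟨𝟙, f⟩ : x ⟶ x ⨯ y`: the comparison map
between two equal graphs commutes with the first projections, so it is the identity, and then the
second projections agree. Hence `f ↦ graph f` injects `x ⟶ y` into `Subobject (x ⨯ y)`. -/

namespace CategoryTheory

variable {C : Type*} [Category C] {x y : C} [HasBinaryProduct x y]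

noncomputable def graph (f : x ⟶ y) : Subobject (x ⨯ y) :=
  Subobject.mk (prod.lift (𝟙 x) f)

theorem graph_injective : Function.Injective (graph : (x ⟶ y) → Subobject (x ⨯ y)) := by
  intro f g hfg
  have hcomm : Subobject.ofMkLEMk _ _ hfg.le ≫ prod.lift (𝟙 x) g = prod.lift (𝟙 x) f :=
    Subobject.ofMkLEMk_comp hfg.le
  have hid : Subobject.ofMkLEMk _ _ hfg.le = 𝟙 x := by
    simpa only [Category.assoc, prod.lift_fst, Category.comp_id] using hcomm =≫ prod.fst
  simpa only [hid, Category.assoc, prod.lift_snd, Category.id_comp] using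
    (hcomm =≫ prod.snd).symm

end CategoryTheory

/-- In an abelian category in which every object has only finitely many subobjects,
all Hom-groups are finite. -/
theorem hom_finite_of_finitely_many_subobjects (C : Type*) [Category C] [Abelian C]
    (hfin : ∀ z : C, Finite (Subobject z)) (x y : C) :
    Finite (x ⟶ y) :=
  Finite.of_injective graph graph_injective
end

section
/- Let R be a ring and let M and N be R-modules, both of finite length l (Module.length R M = Module.length R N = l for a natural number l). Let C be an R-module and f : C →ₗ[R] M, g : C →ₗ[R] N linear maps. Then the following are equivalent: (i) there exists a linear equivalence e : M ≃ₗ[R] N such that the range of the map f.prod g : C →ₗ[R] M × N equals the graph of e; (ii) the quotient module C ⧸ (ker f ⊔ ker g) has length l. -/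
/-!
A correspondence `(f, g)` is the graph of an isomorphism exactly when `f` and `g` are
surjective with the same kernel. For `K ⊇ ker f`, the submodule lattice of `C ⧸ K` embeds
strictly monotonically into that of `M` via `P ↦ f(π⁻¹ P)`, sending `⊥` to `f K` and `⊤` to
`range f`. If `C ⧸ K` is as long as `M` and the length is finite, the image of `⊤` has
height at least the length of `M`, hence coheight `0`, so `range f = M`; dually `f K = 0`.
Applied to `K = ker f ⊔ ker g` and both `f` and `g`, this gives `ker f = K = ker g`
and surjectivity.
-/

/-- The (Jordan–Hölder) length of an `R`-module `M`: the Krull dimension of its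
lattice of submodules, i.e. the supremum of the lengths of chains of submodules. -/
noncomputable def Module.length' (R M : Type*) [Ring R] [AddCommGroup M] [Module R M] :
    WithBot ℕ∞ :=
  Order.krullDim (Submodule R M)

section

open Order

variable {α β : Type*} [Preorder α] [PartialOrder β]

theorem StrictMono.apply_top_eq_top_of_krullDim_le [OrderTop α] [OrderTop β]
    {φ : α → β} (hφ : StrictMono φ) (hle : krullDim β ≤ krullDim α) (hfin : krullDim β ≠ ⊤) :
    φ ⊤ = ⊤ := by
  -- `height (φ ⊤) ≥ krullDim α ≥ krullDim β ≥ height (φ ⊤) + coheight (φ ⊤)`, all finite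
  obtain ⟨d, hd⟩ := WithBot.ne_bot_iff_exists.1 ((krullDim_ne_bot_iff (α := β)).2 ⟨⊤⟩)
  lift d to ℕ using by rintro rfl; exact hfin hd.symm
  have hsum : height (φ ⊤) + coheight (φ ⊤) ≤ d := by
    rw [← WithBot.coe_le_coe, hd, krullDim_eq_iSup_height_add_coheight_of_nonempty,
      WithBot.coe_le_coe]
    exact le_iSup (fun b ↦ height b + coheight b) (φ ⊤)
  have hheight : (d : ℕ∞) ≤ height (φ ⊤) := by
    rw [← WithBot.coe_le_coe, hd]
    exact hle.trans (height_top_eq_krullDim (α := α) ▸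
      WithBot.coe_le_coe.2 (height_le_height_apply_of_strictMono φ hφ ⊤))
  lift height (φ ⊤) to ℕ using ne_top_of_le_ne_top (ENat.natCast_ne_top d)
    (le_self_add.trans hsum) with h
  lift coheight (φ ⊤) to ℕ using ne_top_of_le_ne_top (ENat.natCast_ne_top d)
    (le_add_self.trans hsum) with c hc
  have hc0 : c = 0 := by norm_cast at hsum hheight; omega
  exact (coheight_eq_zero.1 (by rw [← hc, hc0, Nat.cast_zero])).eq_top

theorem StrictMono.apply_bot_eq_bot_of_krullDim_le [OrderBot α] [OrderBot β]
    {φ : α → β} (hφ : StrictMono φ) (hle : krullDim β ≤ krullDim α) (hfin : krullDim β ≠ ⊤) :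
    φ ⊥ = ⊥ :=
  hφ.dual.apply_top_eq_top_of_krullDim_le (α := αᵒᵈ) (β := βᵒᵈ)
    (by simpa using hle) (by simpa using hfin)

end

section

variable {R M N C : Type*} [Ring R] [AddCommGroup M] [Module R M] [AddCommGroup N] [Module R N]
  [AddCommGroup C] [Module R C]

open LinearMap Submodule

theorem LinearEquiv.length'_eq (e : M ≃ₗ[R] N) : Module.length' R M = Module.length' R N :=
  Order.krullDim_eq_of_orderIso (Submodule.orderIsoMapComap e)

theorem Submodule.strictMono_map_comap_mkQ (f : C →ₗ[R] M) {K : Submodule R C}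
    (hK : ker f ≤ K) : StrictMono fun P : Submodule R (C ⧸ K) ↦ (P.comap K.mkQ).map f := by
  have hcomap (P : Submodule R (C ⧸ K)) : ((P.comap K.mkQ).map f).comap f = P.comap K.mkQ := by
    rw [comap_map_eq, sup_eq_left]
    exact hK.trans (by simpa using comap_mono (f := K.mkQ) bot_le)
  refine Monotone.strictMono_of_injective (fun P Q h ↦ map_mono (comap_mono h)) fun P Q h ↦ ?_
  exact comap_injective_of_surjective K.mkQ_surjective <| by
    simpa only [hcomap] using congrArg (comap f) h

theorem LinearMap.ker_eq_and_surjective_of_length'_le (f : C →ₗ[R] M) {K : Submodule R C}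
    (hK : ker f ≤ K) (hle : Module.length' R M ≤ Module.length' R (C ⧸ K))
    (hfin : Module.length' R M ≠ ⊤) : K = ker f ∧ Function.Surjective f := by
  have hφ := strictMono_map_comap_mkQ f hK
  have hbot := hφ.apply_bot_eq_bot_of_krullDim_le hle hfin
  have htop := hφ.apply_top_eq_top_of_krullDim_le hle hfin
  simp only [comap_bot, ker_mkQ, comap_top, Submodule.map_top] at hbot htop
  exact ⟨le_antisymm (le_ker_iff_map.2 hbot) hK, range_eq_top.1 htop⟩

theorem LinearMap.range_prod_eq_graph_iff (f : C →ₗ[R] M) (g : C →ₗ[R] N) (e : M →ₗ[R] N) :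
    range (f.prod g) = graph e ↔ Function.Surjective f ∧ e ∘ₗ f = g := by
  constructor
  · intro he
    refine ⟨fun m ↦ ?_, ?_⟩
    · obtain ⟨c, hc⟩ : (m, e m) ∈ range (f.prod g) := he ▸ (mem_graph_iff _ _).2 rfl
      exact ⟨c, congrArg Prod.fst hc⟩
    · ext c
      exact ((mem_graph_iff _ _).1 (he ▸ mem_range_self (f.prod g) c)).symm
  · rintro ⟨hf, rfl⟩
    rw [graph_eq_range_prod, ← range_comp_of_range_eq_top _ (range_eq_top.2 hf)]
    rfl

theorem LinearMap.exists_linearEquiv_comp_eq_of_ker_eq {f : C →ₗ[R] M} {g : C →ₗ[R] N}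
    (hf : Function.Surjective f) (hg : Function.Surjective g) (h : ker f = ker g) :
    ∃ e : M ≃ₗ[R] N, (e : M →ₗ[R] N) ∘ₗ f = g :=
  ⟨(f.quotKerEquivOfSurjective hf).symm ≪≫ₗ quotEquivOfEq _ _ h ≪≫ₗ
    g.quotKerEquivOfSurjective hg, by ext c; simp⟩

end

/-- Let `M`, `N` be `R`-modules of the same finite length `l` and let
`(C; f, g)` be a correspondence between them. Then the range of `f.prod g` is the graph
of an isomorphism `M ≃ N` if and only if the core `C ⧸ (ker f ⊔ ker g)` of the
correspondence has length `l`. -/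
theorem correspondence_isom_iff_core_length (R M N C : Type*) [Ring R]
    [AddCommGroup M] [Module R M] [AddCommGroup N] [Module R N]
    [AddCommGroup C] [Module R C] (l : ℕ)
    (hM : Module.length' R M = l) (hN : Module.length' R N = l)
    (f : C →ₗ[R] M) (g : C →ₗ[R] N) :
    (∃ e : M ≃ₗ[R] N, LinearMap.range (f.prod g) = LinearMap.graph (e : M →ₗ[R] N)) ↔
      Module.length' R (C ⧸ (LinearMap.ker f ⊔ LinearMap.ker g)) = l := by
  constructor
  · rintro ⟨e, he⟩
    obtain ⟨hf, hgf⟩ := (LinearMap.range_prod_eq_graph_iff f g e).1 he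
    rw [← hgf, LinearEquiv.ker_comp, sup_idem, (f.quotKerEquivOfSurjective hf).length'_eq, hM]
  · intro h
    have hfin : (l : WithBot ℕ∞) ≠ ⊤ := WithBot.coe_injective.ne (ENat.natCast_ne_top l)
    obtain ⟨hKf, hf⟩ :=
      f.ker_eq_and_surjective_of_length'_le le_sup_left (by rw [hM, h]) (hM ▸ hfin)
    obtain ⟨hKg, hg⟩ :=
      g.ker_eq_and_surjective_of_length'_le le_sup_right (by rw [hN, h]) (hN ▸ hfin)
    obtain ⟨e, he⟩ := LinearMap.exists_linearEquiv_comp_eq_of_ker_eq hf hg (hKf.symm.trans hKg)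
    exact ⟨e, (LinearMap.range_prod_eq_graph_iff f g e).2 ⟨hf, he⟩⟩
end

section
/- Let R be a ring and let X, Y, Z, D, E be R-modules with Z of finite length. Let g₁ : D →ₗ[R] X, g₂ : D →ₗ[R] Z, h₁ : E →ₗ[R] Z, h₂ : E →ₗ[R] Y be linear maps. Let P be the pullback submodule {(d, e) ∈ D × E : g₂ d = h₁ e}, and let p₁ : P →ₗ[R] X, p₂ : P →ₗ[R] Y be the maps (d,e) ↦ g₁ d and (d,e) ↦ h₂ e. Then Module.length R (P ⧸ (ker p₁ ⊔ ker p₂)) ≤ Module.length R Z. -/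
/-!
The map `q : P → Z`, `(d, e) ↦ g₂ d = h₁ e`, has kernel inside `ker p₁ ⊔ ker p₂`: if
`g₂ d = 0 = h₁ e` then `(d, e) = (d, 0) + (0, e)` with `(d, 0) ∈ ker p₂` and `(0, e) ∈ ker p₁`.
Hence the core is a quotient of `P ⧸ ker q ≅ range q ≤ Z`, and length is monotone under
quotients and submodules.
-/

/-- The (Jordan–Hölder) length of an `R`-module `M`: the Krull dimension of its
lattice of submodules, i.e. the supremum of the lengths of chains of submodules. -/
noncomputable def Module.lengthKrull (R M : Type*) [Ring R] [AddCommGroup M] [Module R M] :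
    WithBot ℕ∞ :=
  Order.krullDim (Submodule R M)

namespace Module

variable {R M N : Type*} [Ring R] [AddCommGroup M] [Module R M] [AddCommGroup N] [Module R N]

theorem lengthKrull_le_of_injective {f : M →ₗ[R] N} (hf : Function.Injective f) :
    lengthKrull R M ≤ lengthKrull R N :=
  Order.krullDim_le_of_strictMono _ (Submodule.map_strictMono_of_injective hf)

theorem lengthKrull_le_of_surjective {f : M →ₗ[R] N} (hf : Function.Surjective f) :
    lengthKrull R N ≤ lengthKrull R M :=
  Order.krullDim_le_of_strictMono _ (Submodule.comap_strictMono_of_surjective hf)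

theorem lengthKrull_quotient_le_of_ker_le (f : M →ₗ[R] N) {K : Submodule R M}
    (hK : LinearMap.ker f ≤ K) : lengthKrull R (M ⧸ K) ≤ lengthKrull R N :=
  calc lengthKrull R (M ⧸ K)
      ≤ lengthKrull R (M ⧸ LinearMap.ker f) :=
        lengthKrull_le_of_surjective (Submodule.factor_surjective hK)
    _ ≤ lengthKrull R N := lengthKrull_le_of_injective <| LinearMap.ker_eq_bot.mp <|
        Submodule.ker_liftQ_eq_bot _ f le_rfl le_rfl

end Module

theorem ker_pullback_fst_le_ker_sup_ker {R X Y Z D E : Type*} [Ring R]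
    [AddCommGroup X] [Module R X] [AddCommGroup Y] [Module R Y]
    [AddCommGroup Z] [Module R Z] [AddCommGroup D] [Module R D]
    [AddCommGroup E] [Module R E]
    {g₁ : D →ₗ[R] X} {g₂ : D →ₗ[R] Z} {h₁ : E →ₗ[R] Z} {h₂ : E →ₗ[R] Y}
    {P : Submodule R (D × E)} (hP : ∀ de : D × E, de ∈ P ↔ g₂ de.1 = h₁ de.2)
    {p₁ : P →ₗ[R] X} (hp₁ : ∀ de : P, p₁ de = g₁ (de : D × E).1)
    {p₂ : P →ₗ[R] Y} (hp₂ : ∀ de : P, p₂ de = h₂ (de : D × E).2) :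
    LinearMap.ker (g₂ ∘ₗ LinearMap.fst R D E ∘ₗ P.subtype) ≤
      LinearMap.ker p₁ ⊔ LinearMap.ker p₂ := by
  rintro ⟨⟨d, e⟩, hde⟩ hd
  replace hd : g₂ d = 0 := hd
  have he : h₁ e = 0 := by rw [← (hP _).mp hde, hd]
  have hd0 : (d, (0 : E)) ∈ P := (hP _).mpr (by simpa using hd)
  have h0e : ((0 : D), e) ∈ P := (hP _).mpr (by simpa using he.symm)
  have hsplit : (⟨(d, e), hde⟩ : P) = ⟨(0, e), h0e⟩ + ⟨(d, 0), hd0⟩ := by ext <;> simp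
  rw [hsplit]
  exact Submodule.add_mem_sup (by simp [hp₁]) (by simp [hp₂])

theorem length_core_comp_le_general (R X Y Z D E : Type*) [Ring R]
    [AddCommGroup X] [Module R X] [AddCommGroup Y] [Module R Y]
    [AddCommGroup Z] [Module R Z] [AddCommGroup D] [Module R D]
    [AddCommGroup E] [Module R E]
    (g₁ : D →ₗ[R] X) (g₂ : D →ₗ[R] Z) (h₁ : E →ₗ[R] Z) (h₂ : E →ₗ[R] Y)
    (P : Submodule R (D × E)) (hP : ∀ de : D × E, de ∈ P ↔ g₂ de.1 = h₁ de.2)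
    (p₁ : P →ₗ[R] X) (hp₁ : ∀ de : P, p₁ de = g₁ (de : D × E).1)
    (p₂ : P →ₗ[R] Y) (hp₂ : ∀ de : P, p₂ de = h₂ (de : D × E).2) :
    Module.lengthKrull R (P ⧸ (LinearMap.ker p₁ ⊔ LinearMap.ker p₂)) ≤ Module.lengthKrull R Z :=
  Module.lengthKrull_quotient_le_of_ker_le _ (ker_pullback_fst_le_ker_sup_ker hP hp₁ hp₂)

/-- If the composite of two correspondences `(D; g₁, g₂)` (from `X` to `Z`) and
`(E; h₁, h₂)` (from `Z` to `Y`) is formed on the pullback `P = D ×_Z E`, then the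
length of the core of the composite correspondence is at most the length of `Z`. -/
theorem length_core_comp_le (R X Y Z D E : Type*) [Ring R]
    [AddCommGroup X] [Module R X] [AddCommGroup Y] [Module R Y]
    [AddCommGroup Z] [Module R Z] [AddCommGroup D] [Module R D]
    [AddCommGroup E] [Module R E]
    (hZ : Module.lengthKrull R Z ≠ ⊤)
    (g₁ : D →ₗ[R] X) (g₂ : D →ₗ[R] Z) (h₁ : E →ₗ[R] Z) (h₂ : E →ₗ[R] Y)
    (P : Submodule R (D × E)) (hP : ∀ de : D × E, de ∈ P ↔ g₂ de.1 = h₁ de.2)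
    (p₁ : P →ₗ[R] X) (hp₁ : ∀ de : P, p₁ de = g₁ (de : D × E).1)
    (p₂ : P →ₗ[R] Y) (hp₂ : ∀ de : P, p₂ de = h₂ (de : D × E).2) :
    Module.lengthKrull R (P ⧸ (LinearMap.ker p₁ ⊔ LinearMap.ker p₂)) ≤ Module.lengthKrull R Z :=
  length_core_comp_le_general R X Y Z D E g₁ g₂ h₁ h₂ P hP p₁ hp₁ p₂ hp₂
end

section
/- Let F be a field and let X, Y, Z be finite-dimensional F-vector spaces. Let (C; f : C →ₗ[F] X, g : C →ₗ[F] Y) and (C'; f' : C' →ₗ[F] X, g' : C' →ₗ[F] Y) be correspondences with range (f.prod g) = range (f'.prod g') and finrank F (ker (f.prod g)) = finrank F (ker (f'.prod g')), where C, C' are finite-dimensional. Let (D; h : D →ₗ[F] Y, k : D →ₗ[F] Z) be a further correspondence with D finite-dimensional. Form the pullbacks P = {(c,d) : g c = h d} ≤ C × D and P' = {(c',d) : g' c' = h d} ≤ C' × D, with composite maps u₁ : P → X, (c,d) ↦ f c, u₂ : P → Z, (c,d) ↦ k d, and likewise u₁', u₂' on P'. Then range (u₁.prod u₂) = range (u₁'.prod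 u₂') and finrank F (ker (u₁.prod u₂)) = finrank F (ker (u₁'.prod u₂')). -/
open Module

/-! The composite is formed on the pullback `P = ker (g.coprod (-h)) ≤ C × D`. Its image in
`X × Z` consists of the pairs `(x, z)` joined through some `y` by `range (f.prod g)` and
`range (h.prod k)`, so it depends only on `range (f.prod g)`. Rank–nullity for `g.coprod (-h)`, whose image is
`range g ⊔ range h`, gives `dim P = dim C + dim D - dim (range g ⊔ range h)`; here
`dim C = dim range (f.prod g) + dim ker (f.prod g)` and `range g` is the projection of
`range (f.prod g)` to `Y`, so `dim P`, and with it the kernel dimension of the composite,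
depends only on the class of `(C; f, g)`. -/

section Pullback

variable {R : Type*} {X Y Z C D : Type*}
  [AddCommGroup X] [AddCommGroup Y] [AddCommGroup Z] [AddCommGroup C] [AddCommGroup D]

section Ring

variable [Ring R] [Module R X] [Module R Y] [Module R Z] [Module R C] [Module R D]
  {f : C →ₗ[R] X} {g : C →ₗ[R] Y} {h : D →ₗ[R] Y} {k : D →ₗ[R] Z} {P : Submodule R (C × D)}

theorem pullback_eq_ker_coprod_neg (hP : ∀ cd : C × D, cd ∈ P ↔ g cd.1 = h cd.2) :
    P = LinearMap.ker (g.coprod (-h)) := by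
  ext cd
  simp [hP, ← sub_eq_add_neg, sub_eq_zero]

theorem mem_range_prod_iff_of_pullback (hP : ∀ cd : C × D, cd ∈ P ↔ g cd.1 = h cd.2)
    {u₁ : P →ₗ[R] X} (hu₁ : ∀ cd : P, u₁ cd = f (cd : C × D).1)
    {u₂ : P →ₗ[R] Z} (hu₂ : ∀ cd : P, u₂ cd = k (cd : C × D).2) (xz : X × Z) :
    xz ∈ LinearMap.range (u₁.prod u₂) ↔
      ∃ y, (xz.1, y) ∈ LinearMap.range (f.prod g) ∧ (y, xz.2) ∈ LinearMap.range (h.prod k) := by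
  constructor
  · rintro ⟨⟨⟨c, d⟩, hcd⟩, rfl⟩
    exact ⟨g c, ⟨c, by simp [hu₁]⟩, ⟨d, by simp [hu₂, (hP (c, d)).1 hcd]⟩⟩
  · rintro ⟨y, ⟨c, hc⟩, ⟨d, hd⟩⟩
    obtain ⟨hfc, hgc⟩ := Prod.ext_iff.1 hc
    obtain ⟨hhd, hkd⟩ := Prod.ext_iff.1 hd
    exact ⟨⟨(c, d), (hP (c, d)).2 (hgc.trans hhd.symm)⟩, Prod.ext (by simpa [hu₁] using hfc)
      (by simpa [hu₂] using hkd)⟩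

end Ring

section Field

variable [DivisionRing R] [Module R X] [Module R Y] [Module R Z] [Module R C] [Module R D]
  [FiniteDimensional R C] [FiniteDimensional R D]
  {g : C →ₗ[R] Y} {h : D →ₗ[R] Y} {P : Submodule R (C × D)}

theorem finrank_pullback_add_finrank_sup (hP : ∀ cd : C × D, cd ∈ P ↔ g cd.1 = h cd.2) :
    finrank R P + finrank R ↥(LinearMap.range g ⊔ LinearMap.range h) =
      finrank R C + finrank R D := by
  rw [pullback_eq_ker_coprod_neg hP, ← LinearMap.range_neg h, ← LinearMap.range_coprod,
    add_comm, LinearMap.finrank_range_add_finrank_ker, finrank_prod]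

theorem finrank_ker_prod_of_pullback (f : C →ₗ[R] X)
    (hP : ∀ cd : C × D, cd ∈ P ↔ g cd.1 = h cd.2) (u₁ : P →ₗ[R] X) (u₂ : P →ₗ[R] Z) :
    finrank R (LinearMap.ker (u₁.prod u₂)) + finrank R (LinearMap.range (u₁.prod u₂)) +
        finrank R ↥(LinearMap.range g ⊔ LinearMap.range h) =
      finrank R (LinearMap.ker (f.prod g)) + finrank R (LinearMap.range (f.prod g)) +
        finrank R D := by
  have hPD := finrank_pullback_add_finrank_sup hP
  have hu := (u₁.prod u₂).finrank_range_add_finrank_ker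
  have hfg := (f.prod g).finrank_range_add_finrank_ker
  omega

end Field

end Pullback

theorem comp_correspondence_well_defined_general (F : Type*) [Field F]
    (X Y Z C C' D : Type*)
    [AddCommGroup X] [Module F X]
    [AddCommGroup Y] [Module F Y]
    [AddCommGroup Z] [Module F Z]
    [AddCommGroup C] [Module F C] [FiniteDimensional F C]
    [AddCommGroup C'] [Module F C'] [FiniteDimensional F C']
    [AddCommGroup D] [Module F D] [FiniteDimensional F D]
    (f : C →ₗ[F] X) (g : C →ₗ[F] Y) (f' : C' →ₗ[F] X) (g' : C' →ₗ[F] Y)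
    (hrange : LinearMap.range (f.prod g) = LinearMap.range (f'.prod g'))
    (hker : finrank F (LinearMap.ker (f.prod g)) = finrank F (LinearMap.ker (f'.prod g')))
    (h : D →ₗ[F] Y) (k : D →ₗ[F] Z)
    (P : Submodule F (C × D)) (hP : ∀ cd : C × D, cd ∈ P ↔ g cd.1 = h cd.2)
    (P' : Submodule F (C' × D)) (hP' : ∀ cd : C' × D, cd ∈ P' ↔ g' cd.1 = h cd.2)
    (u₁ : P →ₗ[F] X) (hu₁ : ∀ cd : P, u₁ cd = f (cd : C × D).1)
    (u₂ : P →ₗ[F] Z) (hu₂ : ∀ cd : P, u₂ cd = k (cd : C × D).2)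
    (u₁' : P' →ₗ[F] X) (hu₁' : ∀ cd : P', u₁' cd = f' (cd : C' × D).1)
    (u₂' : P' →ₗ[F] Z) (hu₂' : ∀ cd : P', u₂' cd = k (cd : C' × D).2) :
    LinearMap.range (u₁.prod u₂) = LinearMap.range (u₁'.prod u₂') ∧
      finrank F (LinearMap.ker (u₁.prod u₂)) = finrank F (LinearMap.ker (u₁'.prod u₂')) := by
  have hrange_comp : LinearMap.range (u₁.prod u₂) = LinearMap.range (u₁'.prod u₂') := by
    ext xz
    rw [mem_range_prod_iff_of_pullback hP hu₁ hu₂, mem_range_prod_iff_of_pullback hP' hu₁' hu₂',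
      hrange]
  have hrange_g : LinearMap.range g = LinearMap.range g' := by
    simpa only [← LinearMap.range_comp, LinearMap.snd_prod] using
      congrArg (Submodule.map (LinearMap.snd F X Y)) hrange
  refine ⟨hrange_comp, ?_⟩
  have hdim := finrank_ker_prod_of_pullback f hP u₁ u₂
  have hdim' := finrank_ker_prod_of_pullback f' hP' u₁' u₂'
  rw [hrange_comp, hrange_g, hrange, hker] at hdim
  omega

/-- Composition of correspondences between finite-dimensional vector spaces is well
defined on equivalence classes: if the correspondences `(C; f, g)` and `(C'; f', g')`
from `X` to `Y` have the same image in `X × Y` and kernels of the same dimension, then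
their composites with a further correspondence `(D; h, k)` from `Y` to `Z`, formed on
the pullbacks `P = C ×_Y D` and `P' = C' ×_Y D`, again have the same image in `X × Z`
and kernels of the same dimension. -/
theorem comp_correspondence_well_defined (F : Type*) [Field F]
    (X Y Z C C' D : Type*)
    [AddCommGroup X] [Module F X] [FiniteDimensional F X]
    [AddCommGroup Y] [Module F Y] [FiniteDimensional F Y]
    [AddCommGroup Z] [Module F Z] [FiniteDimensional F Z]
    [AddCommGroup C] [Module F C] [FiniteDimensional F C]
    [AddCommGroup C'] [Module F C'] [FiniteDimensional F C']
    [AddCommGroup D] [Module F D] [FiniteDimensional F D]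
    (f : C →ₗ[F] X) (g : C →ₗ[F] Y) (f' : C' →ₗ[F] X) (g' : C' →ₗ[F] Y)
    (hrange : LinearMap.range (f.prod g) = LinearMap.range (f'.prod g'))
    (hker : finrank F (LinearMap.ker (f.prod g)) = finrank F (LinearMap.ker (f'.prod g')))
    (h : D →ₗ[F] Y) (k : D →ₗ[F] Z)
    (P : Submodule F (C × D)) (hP : ∀ cd : C × D, cd ∈ P ↔ g cd.1 = h cd.2)
    (P' : Submodule F (C' × D)) (hP' : ∀ cd : C' × D, cd ∈ P' ↔ g' cd.1 = h cd.2)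
    (u₁ : P →ₗ[F] X) (hu₁ : ∀ cd : P, u₁ cd = f (cd : C × D).1)
    (u₂ : P →ₗ[F] Z) (hu₂ : ∀ cd : P, u₂ cd = k (cd : C × D).2)
    (u₁' : P' →ₗ[F] X) (hu₁' : ∀ cd : P', u₁' cd = f' (cd : C' × D).1)
    (u₂' : P' →ₗ[F] Z) (hu₂' : ∀ cd : P', u₂' cd = k (cd : C' × D).2) :
    LinearMap.range (u₁.prod u₂) = LinearMap.range (u₁'.prod u₂') ∧
      finrank F (LinearMap.ker (u₁.prod u₂)) = finrank F (LinearMap.ker (u₁'.prod u₂')) :=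
  comp_correspondence_well_defined_general F X Y Z C C' D f g f' g' hrange hker h k P hP P' hP' u₁
    hu₁ u₂ hu₂ u₁' hu₁' u₂' hu₂'
end
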